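/- The natural algebra homomorphism F_{q^d}(τ) ⊗_{F_q(t)} F_q((t)) → F_{q^d}((τ)), f ⊗ g ↦ f·g, is an isomorphism of F_q((t))-algebras, where F_{q^d}((τ)) is the skew Laurent series ring with τλ = λ^q τ; in particular F_{q^d}((τ)) is a skew field of dimension d² over F_q((t)). -/

import Mathlib

/-!
Let `λ_0, …, λ_{d-1}` be an `F_q`-basis of `F_{q^d}`. Since `λ^{q^d} = λ`, the element `t = τ^d`
commutes with `F_{q^d}`, so the coefficient of `Σ g_{i,l} λ_l τ^i` at `τ^{md+i}` (`0 ≤ i < d`) is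
`Σ_l (g_{i,l})_m λ_l`; hence the `d²` elements `λ_l τ^i` form an `F_q((t))`-basis of
`F_{q^d}((τ))`. The same elements span `F_{q^d}{τ}` over `F_q[t]`, hence span the tensor product
over `F_q((t))`, and the multiplication map sends them to that basis, so it is bijective.
Multiplying lowest-order coefficients shows that `F_{q^d}((τ))` has no zero divisors; being
finite-dimensional over a field, it is then a division ring.
-/

open scoped TensorProduct
open scoped RatFunc


/-- A characterization of the skew polynomial ring `K{τ}` (for `K = F_{q^d}`) with commutation
rule `τ·λ = λ^q·τ`: a ring `R` together with coefficient maps `c n : R →+ K` such that elements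
are uniquely determined by their (finitely supported) coefficients, every finitely supported
family of coefficients occurs, `1` and `τ` have the expected coefficients, and multiplication
is the twisted convolution `c_n(x·y) = Σ_{i=0}^n c_i(x)·c_{n-i}(y)^{q^i}` (which encodes
`τλ = λ^q τ`). -/
structure IsSkewPolyRing (q : ℕ) (K : Type) [Field K] (R : Type) [Ring R]
    (c : ℕ → R →+ K) (τ : R) : Prop where
  inj : Function.Injective fun (x : R) (n : ℕ) => c n x
  support_finite : ∀ x : R, (Function.support fun n => c n x).Finite
  surj : ∀ f : ℕ →₀ K, ∃ x : R, ∀ n, c n x = f n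
  coeff_one : ∀ n, c n (1 : R) = if n = 0 then 1 else 0
  coeff_tau : ∀ n, c n τ = if n = 1 then 1 else 0
  coeff_mul : ∀ x y : R, ∀ n,
    c n (x * y) = ∑ i ∈ Finset.range (n + 1), c i x * c (n - i) y ^ q ^ i

/-- A characterization of the skew Laurent series ring `K((τ))` (for `K = F_{q^d}`, with
`τλ = λ^q τ`, so `τ^{-1}λ = λ^{q^{-1}}τ^{-1}`): coefficients are indexed by `ℤ`, supports
are bounded below, and multiplication is the twisted convolution
`c_n(x·y) = Σ_{i+j=n} c_i(x)·c_j(y)^{q^i}`, where for `λ ∈ F_{q^d}` the Frobenius iterate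
`λ^{q^i}` for `i ∈ ℤ` equals `λ^{q^{i mod d}}` (as `λ^{q^d} = λ`). -/
structure IsSkewLaurentRing (q d : ℕ) (K : Type) [Field K] (S : Type) [Ring S]
    (c : ℤ → S →+ K) (τ : S) : Prop where
  inj : Function.Injective fun (x : S) (n : ℤ) => c n x
  bddBelow : ∀ x : S, ∃ N : ℤ, ∀ n < N, c n x = 0
  surj : ∀ f : ℤ → K, (∃ N : ℤ, ∀ n < N, f n = 0) → ∃ x : S, ∀ n, c n x = f n
  coeff_one : ∀ n, c n (1 : S) = if n = 0 then 1 else 0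
  coeff_tau : ∀ n, c n τ = if n = 1 then 1 else 0
  coeff_mul : ∀ x y : S, ∀ n : ℤ,
    c n (x * y) = ∑ᶠ p : ℤ × ℤ,
      if p.1 + p.2 = n then c p.1 x * c p.2 y ^ q ^ (p.1 % (d : ℤ)).toNat else 0

theorem Submodule.span_range_one_tmul_eq_top {ι A B M : Type*} [CommSemiring A] [Semiring B]
    [Algebra A B] [AddCommMonoid M] [Module A M] {v : ι → M}
    (hv : Submodule.span A (Set.range v) = ⊤) :
    Submodule.span B (Set.range fun i => (1 : B) ⊗ₜ[A] v i) = ⊤ := by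
  rw [← Submodule.baseChange_top, ← hv, Submodule.baseChange_span, ← Set.range_comp]
  rfl

theorem AddMonoidHom.bijective_of_map_smul_eq_basis {ι L M N : Type*} [Fintype ι] [Ring L]
    [AddCommGroup M] [Module L M] [AddCommGroup N] [Module L N] (Φ : M →+ N) {v : ι → M}
    (hv : Submodule.span L (Set.range v) = ⊤) (b : Module.Basis ι L N)
    (hΦ : ∀ (f : L) (i : ι), Φ (f • v i) = f • b i) : Function.Bijective Φ := by
  have hΦsum : ∀ a : ι → L, Φ (∑ i, a i • v i) = ∑ i, a i • b i := by
    simp [map_sum, hΦ]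
  refine ⟨(injective_iff_map_eq_zero Φ).2 fun z hz => ?_, fun y => ?_⟩
  · obtain ⟨a, rfl⟩ :=
      (Submodule.mem_span_range_iff_exists_fun L).1 (hv.symm ▸ Submodule.mem_top : z ∈ _)
    rw [hΦsum] at hz
    simp [Fintype.linearIndependent_iff.1 b.linearIndependent a hz]
  · exact ⟨∑ i, b.repr y i • v i, by rw [hΦsum, b.sum_repr]⟩

theorem Module.finrank_eq_of_card_eq_pow {F V : Type*} [Field F] [Fintype F] [AddCommGroup V]
    [Module F V] [Fintype V] {d : ℕ} (h : Fintype.card V = Fintype.card F ^ d) :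
    Module.finrank F V = d :=
  Nat.pow_right_injective Fintype.one_lt_card (Module.card_eq_pow_finrank.symm.trans h)

namespace IsSkewPolyRing

variable {q : ℕ} {K R : Type} [Field K] [Ring R] {c : ℕ → R →+ K} {τ : R}
  (hR : IsSkewPolyRing q K R c τ)
include hR

theorem coeff_zero_tau_mul (y : R) : c 0 (τ * y) = 0 := by
  simp [hR.coeff_mul, hR.coeff_tau]

theorem coeff_succ_tau_mul (y : R) (n : ℕ) : c (n + 1) (τ * y) = c n y ^ q := by
  rw [hR.coeff_mul, Finset.sum_eq_single 1]
  · simp [hR.coeff_tau]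
  · intro i _ hi
    simp [hR.coeff_tau, hi]
  · simp

theorem coeff_tau_pow (hq : q ≠ 0) (i n : ℕ) : c n (τ ^ i) = if n = i then 1 else 0 := by
  induction i generalizing n with
  | zero => simpa using hR.coeff_one n
  | succ i ih =>
    rw [pow_succ']
    cases n with
    | zero => simp [hR.coeff_zero_tau_mul]
    | succ n => simp [hR.coeff_succ_tau_mul, ih, apply_ite (· ^ q), hq]

variable {ι : K →+* R} (hι : ∀ (a : K) (n : ℕ), c n (ι a) = if n = 0 then a else 0)
include hι

theorem coeff_iota_mul (a : K) (y : R) (n : ℕ) : c n (ι a * y) = a * c n y := by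
  rw [hR.coeff_mul, Finset.sum_eq_single 0]
  · simp [hι]
  · intro i _ hi
    simp [hι, hi]
  · simp

theorem coeff_iota_mul_tau_pow (hq : q ≠ 0) (a : K) (i n : ℕ) :
    c n (ι a * τ ^ i) = if n = i then a else 0 := by
  simp [hR.coeff_iota_mul hι, hR.coeff_tau_pow hq]

theorem tau_mul_iota (hq : q ≠ 0) (a : K) : τ * ι a = ι (a ^ q) * τ := by
  refine hR.inj (funext fun n => ?_)
  show c n (τ * ι a) = c n (ι (a ^ q) * τ)
  rw [hR.coeff_iota_mul hι]
  cases n with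
  | zero => simp [hR.coeff_zero_tau_mul, hR.coeff_tau]
  | succ n => simp [hR.coeff_succ_tau_mul, hR.coeff_tau, hι, apply_ite (· ^ q), hq]

theorem tau_pow_mul_iota (hq : q ≠ 0) (m : ℕ) (a : K) : τ ^ m * ι a = ι (a ^ q ^ m) * τ ^ m := by
  induction m generalizing a with
  | zero => simp
  | succ m ih =>
    rw [pow_succ, mul_assoc, hR.tau_mul_iota hι hq, ← mul_assoc, ih, mul_assoc, ← pow_succ,
      ← pow_mul, ← pow_succ']

theorem eq_sum_iota_mul_tau_pow (hq : q ≠ 0) (r : R) :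
    r = ∑ n ∈ (hR.support_finite r).toFinset, ι (c n r) * τ ^ n := by
  refine hR.inj (funext fun m => ?_)
  simp only [map_sum, hR.coeff_iota_mul_tau_pow hι hq, Finset.sum_ite_eq]
  split_ifs with h
  · rfl
  · simpa using h

theorem coeff_map_iota_mul_tau_pow (hq : q ≠ 0) {S : Type} [Ring S] {cS : ℤ → S →+ K}
    {j : R →+* S} (hj : ∀ (r : R) (n : ℤ), cS n (j r) = if _ : 0 ≤ n then c n.toNat r else 0)
    (a : K) (i : ℕ) (n : ℤ) : cS n (j (ι a * τ ^ i)) = if n = i then a else 0 := by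
  by_cases hn : 0 ≤ n
  · rw [hj, dif_pos hn, hR.coeff_iota_mul_tau_pow hι hq]
    exact if_congr (by omega) rfl rfl
  · rw [hj, dif_neg hn, if_neg (by omega)]

end IsSkewPolyRing

namespace IsSkewPolyRing

variable {Fq K R : Type} [Field Fq] [Field K] [Fintype K] [Algebra Fq K] [Ring R]
  [Algebra (Polynomial Fq) R] {q d : ℕ} {c : ℕ → R →+ K} {τ : R}
  (hR : IsSkewPolyRing q K R c τ) (hq : q ≠ 0) (hK : Fintype.card K = q ^ d)
  {ι : K →+* R} (hι : ∀ (a : K) (n : ℕ), c n (ι a) = if n = 0 then a else 0)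
  (halg : ∀ p : Polynomial Fq,
    algebraMap (Polynomial Fq) R p = p.sum fun n a => ι (algebraMap Fq K a) * τ ^ (d * n))
include hR hq hK hι halg

theorem monomial_smul_iota_mul_tau_pow (m : ℕ) (α : Fq) (b : K) (i : ℕ) :
    Polynomial.monomial m α • (ι b * τ ^ i) = ι (α • b) * τ ^ (d * m + i) := by
  have hfrob : b ^ q ^ (d * m) = b := by
    rw [pow_mul, ← hK, FiniteField.pow_card_pow]
  rw [Algebra.smul_def, halg, Polynomial.sum_monomial_index _ _ (by simp), mul_assoc,
    ← mul_assoc (τ ^ (d * m)), hR.tau_pow_mul_iota hι hq, hfrob, mul_assoc, ← pow_add,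
    ← mul_assoc, ← map_mul, ← Algebra.smul_def]

theorem span_iota_basis_mul_tau_pow_eq_top [NeZero d] (b : Module.Basis (Fin d) Fq K) :
    Submodule.span (Polynomial Fq)
      (Set.range fun p : Fin d × Fin d => ι (b p.2) * τ ^ (p.1 : ℕ)) = ⊤ := by
  refine eq_top_iff.2 fun r _ => ?_
  rw [hR.eq_sum_iota_mul_tau_pow hι hq r]
  refine Submodule.sum_mem _ fun n _ => ?_
  rw [← b.sum_repr (c n r), map_sum, Finset.sum_mul, ← Nat.div_add_mod n d]
  refine Submodule.sum_mem _ fun l _ => ?_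
  rw [← hR.monomial_smul_iota_mul_tau_pow hq hK hι halg]
  exact Submodule.smul_mem _ _
    (Submodule.subset_span ⟨(⟨n % d, Nat.mod_lt n (NeZero.pos d)⟩, l), rfl⟩)

end IsSkewPolyRing

namespace IsSkewLaurentRing

variable {q d : ℕ} {K S : Type} [Field K] [Ring S] {c : ℤ → S →+ K} {τ : S}
  (hS : IsSkewLaurentRing q d K S c τ)
include hS

theorem exists_coeff_ne_zero_and_forall_lt {x : S} (hx : x ≠ 0) :
    ∃ m, c m x ≠ 0 ∧ ∀ k < m, c k x = 0 := by
  obtain ⟨N, hN⟩ := hS.bddBelow x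
  have hne : ∃ m, c m x ≠ 0 := by
    by_contra! h
    exact hx (hS.inj (funext fun n => by simp [h n]))
  obtain ⟨m, hm, hmin⟩ := Int.exists_least_of_bdd
    ⟨N, fun k hk => le_of_not_gt fun hlt => hk (hN k hlt)⟩ hne
  exact ⟨m, hm, fun k hk => by_contra fun h => absurd (hmin k h) (not_le.2 hk)⟩

variable (hq : q ≠ 0)
include hq

theorem noZeroDivisors : NoZeroDivisors S := by
  refine ⟨fun {x y} hxy => ?_⟩
  by_contra! h
  obtain ⟨mx, hmx, hx⟩ := hS.exists_coeff_ne_zero_and_forall_lt h.1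
  obtain ⟨my, hmy, hy⟩ := hS.exists_coeff_ne_zero_and_forall_lt h.2
  have hlead : c (mx + my) (x * y) = c mx x * c my y ^ q ^ (mx % (d : ℤ)).toNat := by
    rw [hS.coeff_mul, finsum_eq_single _ (mx, my)]
    · simp
    · rintro ⟨k, l⟩ hkl
      dsimp only
      split_ifs with hsum
      · rcases lt_or_ge k mx with hk | hk
        · simp [hx k hk]
        · have hl : l < my := by
            rcases hk.lt_or_eq with hk | rfl
            · omega
            · exact absurd (by simp; omega) hkl
          simp [hy l hl, hq]
      · rfl
  rw [hxy, map_zero] at hlead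
  exact mul_ne_zero hmx (pow_ne_zero _ hmy) hlead.symm

theorem coeff_mul_of_coeff_eq_single {y : S} {i : ℤ} {b : K}
    (hy : ∀ n, c n y = if n = i then b else 0) (x : S) (n : ℤ) :
    c n (x * y) = c (n - i) x * b ^ q ^ ((n - i) % (d : ℤ)).toNat := by
  rw [hS.coeff_mul, finsum_eq_single _ (n - i, i)]
  · simp [hy]
  · rintro ⟨k, l⟩ hkl
    dsimp only
    split_ifs with hsum
    · have hl : l ≠ i := fun hl => hkl (by simp [hl, ← hsum])
      simp [hy, hl, hq]
    · rfl

end IsSkewLaurentRing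

theorem Fin.dvd_mul_add_val_sub_val_iff {d : ℕ} (m : ℤ) (i i' : Fin d) :
    (d : ℤ) ∣ m * d + (i : ℕ) - (i' : ℕ) ↔ i = i' := by
  constructor
  · intro h
    have h' : (d : ℤ) ∣ (i : ℕ) - (i' : ℕ) := by
      have := dvd_sub h (dvd_mul_left (d : ℤ) m)
      rwa [show m * d + (i : ℕ) - (i' : ℕ) - m * d = ((i : ℕ) : ℤ) - (i' : ℕ) by ring] at this
    have := Int.eq_zero_of_abs_lt_dvd h' (abs_lt.2 ⟨by omega, by omega⟩)
    exact Fin.ext (by omega)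
  · rintro rfl
    simp

namespace IsSkewLaurentRing

variable {Fq K S : Type} [Field Fq] [Field K] [Algebra Fq K] [Ring S]
  [Algebra (LaurentSeries Fq) S] {q d : ℕ} {c : ℤ → S →+ K} {τ : S}
  (hS : IsSkewLaurentRing q d K S c τ) (hq : q ≠ 0)
  (halgS : ∀ (f : LaurentSeries Fq) (n : ℤ),
    c n (algebraMap (LaurentSeries Fq) S f) =
      if (d : ℤ) ∣ n then algebraMap Fq K (f.coeff (n / d)) else 0)
include hS hq halgS

theorem coeff_algebraMap_mul_of_coeff_eq_single {y : S} {i : ℤ} {b : K}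
    (hy : ∀ n, c n y = if n = i then b else 0) (f : LaurentSeries Fq) (n : ℤ) :
    c n (algebraMap (LaurentSeries Fq) S f * y) =
      if (d : ℤ) ∣ n - i then f.coeff ((n - i) / d) • b else 0 := by
  rw [hS.coeff_mul_of_coeff_eq_single hq hy, halgS]
  split_ifs with h
  · simp [Int.emod_eq_zero_of_dvd h, Algebra.smul_def]
  · simp

variable [NeZero d] {e : Fin d × Fin d → S} {b : Module.Basis (Fin d) Fq K}
  (he : ∀ p n, c n (e p) = if n = ((p.1 : ℕ) : ℤ) then b p.2 else 0)
include he

theorem coeff_sum_smul (g : Fin d × Fin d → LaurentSeries Fq) (m : ℤ) (i : Fin d) :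
    c (m * d + (i : ℕ)) (∑ p, g p • e p) = ∑ l, (g (i, l)).coeff m • b l := by
  simp only [map_sum, Algebra.smul_def, hS.coeff_algebraMap_mul_of_coeff_eq_single hq halgS (he _),
    Fin.dvd_mul_add_val_sub_val_iff, Fintype.sum_prod_type]
  rw [Finset.sum_eq_single i]
  · simp [NeZero.ne d]
  · intro i' _ hi'
    simp [hi'.symm]
  · simp

theorem linearIndependent : LinearIndependent (LaurentSeries Fq) e := by
  refine Fintype.linearIndependent_iff.2 fun g hg ⟨i, l⟩ => HahnSeries.ext (funext fun m => ?_)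
  have hcoeff := congrArg (c (m * d + (i : ℕ))) hg
  rw [hS.coeff_sum_smul hq halgS he, map_zero] at hcoeff
  exact Fintype.linearIndependent_iff.1 b.linearIndependent (fun l => (g (i, l)).coeff m) hcoeff l

theorem span_eq_top : Submodule.span (LaurentSeries Fq) (Set.range e) = ⊤ := by
  refine eq_top_iff.2 fun x _ => ?_
  obtain ⟨N, hN⟩ := hS.bddBelow x
  have hvanish : ∀ (i : Fin d), ∀ m < min 0 N, c (m * d + (i : ℕ)) x = 0 := by
    intro i m hm
    have hi : ((i : ℕ) : ℤ) < d := by exact_mod_cast i.2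
    have hd : (1 : ℤ) ≤ d := by exact_mod_cast NeZero.one_le
    refine hN _ ?_
    -- `m * d + i < (m + 1) * d ≤ m + 1 ≤ N`
    nlinarith [min_le_left 0 N, min_le_right 0 N, mul_nonneg (by omega : (0 : ℤ) ≤ -(m + 1))
      (by omega : (0 : ℤ) ≤ d - 1)]
  let g : Fin d × Fin d → LaurentSeries Fq := fun p =>
    HahnSeries.ofSuppBddBelow (fun m => b.repr (c (m * d + (p.1 : ℕ)) x) p.2)
      ⟨min 0 N, fun m hm => le_of_not_gt fun hlt => hm (by simp [hvanish p.1 m hlt])⟩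
  refine (Submodule.mem_span_range_iff_exists_fun _).2 ⟨g, hS.inj (funext fun n => ?_)⟩
  rw [← (Int.divModEquiv d).symm_apply_apply n, Int.divModEquiv_symm_apply]
  dsimp only
  rw [hS.coeff_sum_smul hq halgS he]
  simp only [g]
  exact b.sum_repr _

end IsSkewLaurentRing

/-- The natural algebra homomorphism
`F_{q^d}(τ) ⊗_{F_q(t)} F_q((t)) → F_{q^d}((τ))`, `f ⊗ g ↦ f·g`, is an isomorphism of
`F_q((t))`-algebras, where `F_{q^d}((τ))` is the skew Laurent series ring with `τλ = λ^q τ`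
and `t = τ^d` central; in particular `F_{q^d}((τ))` is a skew field of dimension `d²` over
`F_q((t))`.  Here `F_{q^d}(τ)` is realized as `F_{q^d}{τ} ⊗_{F_q[t]} F_q(t)`. -/
theorem tensor_laurent_iso_skew_laurent
    (Fq K R S : Type) [Field Fq] [Fintype Fq] [Field K] [Fintype K] [Algebra Fq K]
    [Ring R] [Ring S]
    (q d : ℕ) (hq : q = Fintype.card Fq) (hd : 0 < d) (hK : Fintype.card K = q ^ d)
    (cR : ℕ → R →+ K) (τR : R) (hR : IsSkewPolyRing q K R cR τR)
    (ι : K →+* R) (hι : ∀ (a : K) (n : ℕ), cR n (ι a) = if n = 0 then a else 0)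
    [Algebra (Polynomial Fq) R]
    (halg : ∀ p : Polynomial Fq,
      algebraMap (Polynomial Fq) R p =
        p.sum fun n a => ι (algebraMap Fq K a) * τR ^ (d * n))
    (cS : ℤ → S →+ K) (τS : S) (hS : IsSkewLaurentRing q d K S cS τS)
    (j : R →+* S)
    (hj : ∀ (r : R) (n : ℤ), cS n (j r) = if h : 0 ≤ n then cR n.toNat r else 0)
    [Algebra (LaurentSeries Fq) S]
    (halgS : ∀ (f : LaurentSeries Fq) (n : ℤ),
      cS n (algebraMap (LaurentSeries Fq) S f) =
        if (d : ℤ) ∣ n then algebraMap Fq K (f.coeff (n / d)) else 0)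
    (Φ : (LaurentSeries Fq) ⊗[RatFunc Fq] (RatFunc Fq ⊗[Polynomial Fq] R) →+* S)
    (hΦ : ∀ (f : LaurentSeries Fq) (g : RatFunc Fq) (r : R),
      Φ (f ⊗ₜ[RatFunc Fq] (g ⊗ₜ[Polynomial Fq] r)) =
        algebraMap (LaurentSeries Fq) S (f * algebraMap (RatFunc Fq) (LaurentSeries Fq) g) *
          j r) :
    Function.Bijective Φ ∧ (∀ x : S, x ≠ 0 → IsUnit x) ∧
      Module.finrank (LaurentSeries Fq) S = d ^ 2 := by
  have hq0 : q ≠ 0 := hq ▸ Fintype.card_ne_zero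
  have : NeZero d := ⟨hd.ne'⟩
  let bK : Module.Basis (Fin d) Fq K :=
    Module.finBasisOfFinrankEq Fq K (Module.finrank_eq_of_card_eq_pow (by rw [hK, hq]))
  let e : Fin d × Fin d → R := fun p => ι (bK p.2) * τR ^ (p.1 : ℕ)
  have he : ∀ p n, cS n (j (e p)) = if n = ((p.1 : ℕ) : ℤ) then bK p.2 else 0 :=
    fun p => hR.coeff_map_iota_mul_tau_pow hι hq0 hj _ _
  let bS : Module.Basis (Fin d × Fin d) (LaurentSeries Fq) S :=
    Module.Basis.mk (hS.linearIndependent hq0 halgS he) (hS.span_eq_top hq0 halgS he).ge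
  have hspan := Submodule.span_range_one_tmul_eq_top (B := LaurentSeries Fq)
    (Submodule.span_range_one_tmul_eq_top (B := RatFunc Fq)
      (hR.span_iota_basis_mul_tau_pow_eq_top hq0 hK hι halg bK))
  have hbij : Function.Bijective Φ := Φ.toAddMonoidHom.bijective_of_map_smul_eq_basis hspan bS
    fun f p => by simp [bS, e, hΦ, TensorProduct.smul_tmul', Algebra.smul_def]
  have := hS.noZeroDivisors hq0
  have : Module.Finite (LaurentSeries Fq) S := .of_basis bS
  have := IsArtinianRing.of_finite (LaurentSeries Fq) S
  refine ⟨hbij, fun x hx =>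
    IsArtinianRing.isUnit_of_mem_nonZeroDivisors (mem_nonZeroDivisors_of_ne_zero hx), ?_⟩
  rw [Module.finrank_eq_card_basis bS]
  simp [sq]
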